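/- Let β > 0, B > 0, k ≥ 1, T ≥ 1, and dt, τ > 0. There exists a constant C > 0, depending only on β, B, k, T and dt/τ, such that for all x ∈ ℝ^d with ‖x‖ ≤ B and all prototype tuples R = (ρ_1, …, ρ_k), R′ = (ρ′_1, …, ρ′_k) with all ‖ρ_μ‖, ‖ρ′_μ‖ ≤ B, the per-example ClAM objective satisfies | ‖x − x_R^T‖² − ‖x − x_{R′}^T‖² | ≤ C·Σ_{μ=1}^k ‖ρ_μ − ρ′_μ‖, where x_R^T is the T-step AM iterate started at x with prototypes R. In particular the ClAM objective is Lipschitz in the prototypes on bounded sets. -/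

import Mathlib

open scoped BigOperators

/-- The discrete AM recursion: `x^0 = x` and
`x^{t+1} = x^t + r • ∑_μ σ_μ(x^t; R) (ρ_μ - x^t)`, where `r = dt/τ` and `σ_μ(·; R)` are
the softmax weights determined by the prototypes `ρ` and inverse temperature `β`. -/
noncomputable def amIter {d k : ℕ} (β r : ℝ) (ρ : Fin k → EuclideanSpace ℝ (Fin d))
    (x : EuclideanSpace ℝ (Fin d)) : ℕ → EuclideanSpace ℝ (Fin d)
  | 0 => x
  | t + 1 =>
      amIter β r ρ x t +
        r • ∑ μ, (Real.exp (-β * ‖ρ μ - amIter β r ρ x t‖ ^ 2) /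
            ∑ ν, Real.exp (-β * ‖ρ ν - amIter β r ρ x t‖ ^ 2)) • (ρ μ - amIter β r ρ x t)

/-! Each AM step moves the iterate towards a convex combination of the prototypes, so
`‖x^t‖ + B` grows at most by the factor `1 + r` per step and the iterates up to time `T` stay
in the ball of radius `M = 2B(1 + r)^T`. On that ball the scores `exp (-β‖ρ_μ - v‖²)` are at
least `exp (-4βM²)` and Lipschitz in `(ρ, v)`, so the normalized weights and the one-step map
are Lipschitz as well; iterating gives a Lipschitz bound for `x^T` in the prototypes, and
`|‖u‖² - ‖w‖²| ≤ (‖u‖ + ‖w‖) ‖u - w‖` transfers it to the objective. -/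

open Finset

theorem Real.abs_exp_sub_exp_le_of_nonpos {s t : ℝ} (hs : s ≤ 0) (ht : t ≤ 0) :
    |Real.exp s - Real.exp t| ≤ |s - t| := by
  wlog hst : s ≤ t generalizing s t
  · rw [abs_sub_comm, abs_sub_comm s]
    exact this ht hs (le_of_not_ge hst)
  have hshift : s - t + 1 ≤ Real.exp (s - t) := Real.add_one_le_exp _
  have hexp : Real.exp s = Real.exp t * Real.exp (s - t) := by rw [← Real.exp_add]; ring_nf
  rw [abs_of_nonpos (by linarith [Real.exp_le_exp.2 hst]), abs_of_nonpos (by linarith)]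
  nlinarith [mul_le_mul_of_nonneg_left hshift (Real.exp_pos t).le,
    mul_nonneg (sub_nonneg.2 (Real.exp_le_one_iff.2 ht)) (sub_nonneg.2 hst)]

theorem abs_norm_sq_sub_norm_sq_le {E : Type*} [SeminormedAddCommGroup E] (u w : E) :
    |‖u‖ ^ 2 - ‖w‖ ^ 2| ≤ (‖u‖ + ‖w‖) * ‖u - w‖ := by
  rw [sq_sub_sq, abs_mul, abs_of_nonneg (by positivity)]
  exact mul_le_mul_of_nonneg_left (abs_norm_sub_norm_le u w) (by positivity)

theorem abs_exp_neg_mul_norm_sq_sub_le {E : Type*} [SeminormedAddCommGroup E] {β c : ℝ}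
    (hβ : 0 ≤ β) {u w : E} (hu : ‖u‖ ≤ c) (hw : ‖w‖ ≤ c) :
    |Real.exp (-β * ‖u‖ ^ 2) - Real.exp (-β * ‖w‖ ^ 2)| ≤ 2 * β * c * ‖u - w‖ :=
  calc |Real.exp (-β * ‖u‖ ^ 2) - Real.exp (-β * ‖w‖ ^ 2)|
      ≤ |-β * ‖u‖ ^ 2 - -β * ‖w‖ ^ 2| :=
        Real.abs_exp_sub_exp_le_of_nonpos (by nlinarith [sq_nonneg ‖u‖])
          (by nlinarith [sq_nonneg ‖w‖])
    _ = β * |‖u‖ ^ 2 - ‖w‖ ^ 2| := by rw [← mul_sub, abs_mul, abs_neg, abs_of_nonneg hβ]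
    _ ≤ β * ((c + c) * ‖u - w‖) := by grw [abs_norm_sq_sub_norm_sq_le, hu, hw]
    _ = 2 * β * c * ‖u - w‖ := by ring

theorem sum_abs_div_sum_sub_div_sum_le {ι : Type*} (s : Finset ι) {a b : ι → ℝ}
    (hb : ∀ i ∈ s, 0 ≤ b i) (ha : 0 < ∑ i ∈ s, a i) (hb' : 0 < ∑ i ∈ s, b i) :
    ∑ i ∈ s, |a i / ∑ j ∈ s, a j - b i / ∑ j ∈ s, b j|
      ≤ 2 * (∑ i ∈ s, |a i - b i|) / ∑ i ∈ s, a i := by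
  set A := ∑ j ∈ s, a j
  set B := ∑ j ∈ s, b j
  have hsplit : ∀ i, a i / A - b i / B = (a i - b i) / A + b i / B * ((B - A) / A) := by
    intro i
    field_simp
    ring
  have hAB : |A - B| ≤ ∑ i ∈ s, |a i - b i| := by
    rw [← sum_sub_distrib]
    exact abs_sum_le_sum_abs _ _
  calc ∑ i ∈ s, |a i / A - b i / B|
      ≤ ∑ i ∈ s, (|a i - b i| / A + b i / B * (|A - B| / A)) := by
        gcongr with i hi
        rw [hsplit]
        refine (abs_add_le _ _).trans_eq ?_
        rw [abs_div, abs_mul, abs_div, abs_div, abs_of_nonneg (hb i hi), abs_of_pos ha,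
          abs_of_pos hb', abs_sub_comm B A]
    _ = (∑ i ∈ s, |a i - b i|) / A + |A - B| / A := by
        rw [sum_add_distrib, ← sum_div, ← sum_mul, ← sum_div, div_self hb'.ne', one_mul]
    _ ≤ 2 * (∑ i ∈ s, |a i - b i|) / A := by
        rw [mul_div_assoc, two_mul]
        gcongr

section AM

variable {ι E : Type*} [Fintype ι] [SeminormedAddCommGroup E]

noncomputable def amWeight (β : ℝ) (ρ : ι → E) (v : E) (μ : ι) : ℝ :=
  Real.exp (-β * ‖ρ μ - v‖ ^ 2) / ∑ ν, Real.exp (-β * ‖ρ ν - v‖ ^ 2)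

variable {β r B M : ℝ} {ρ ρ' : ι → E} {v v' : E}

theorem amWeight_nonneg (μ : ι) : 0 ≤ amWeight β ρ v μ := by
  unfold amWeight
  positivity

theorem sum_amWeight_le_one : ∑ μ, amWeight β ρ v μ ≤ 1 := by
  simp only [amWeight, ← sum_div]
  exact div_self_le_one _

theorem amWeight_le_one (μ : ι) : amWeight β ρ v μ ≤ 1 :=
  (single_le_sum (fun ν _ => amWeight_nonneg ν) (mem_univ μ)).trans sum_amWeight_le_one

theorem sum_abs_amWeight_sub_le [Nonempty ι] (hβ : 0 ≤ β) (hρ : ∀ μ, ‖ρ μ‖ ≤ M)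
    (hρ' : ∀ μ, ‖ρ' μ‖ ≤ M) (hv : ‖v‖ ≤ M) (hv' : ‖v'‖ ≤ M) :
    ∑ μ, |amWeight β ρ v μ - amWeight β ρ' v' μ|
      ≤ 8 * β * M * Real.exp (4 * β * M ^ 2) * ∑ μ, (‖ρ μ - ρ' μ‖ + ‖v - v'‖) := by
  have hM : 0 ≤ M := (norm_nonneg v).trans hv
  set e : ι → ℝ := fun μ => Real.exp (-β * ‖ρ μ - v‖ ^ 2)
  set e' : ι → ℝ := fun μ => Real.exp (-β * ‖ρ' μ - v'‖ ^ 2)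
  have hdist : ∀ μ, ‖ρ μ - v‖ ≤ 2 * M := fun μ =>
    (norm_sub_le _ _).trans (by linarith [hρ μ])
  have hdist' : ∀ μ, ‖ρ' μ - v'‖ ≤ 2 * M := fun μ =>
    (norm_sub_le _ _).trans (by linarith [hρ' μ])
  have he : ∀ μ, |e μ - e' μ| ≤ 4 * β * M * (‖ρ μ - ρ' μ‖ + ‖v - v'‖) := fun μ =>
    calc |e μ - e' μ| ≤ 2 * β * (2 * M) * ‖ρ μ - v - (ρ' μ - v')‖ :=
          abs_exp_neg_mul_norm_sq_sub_le hβ (hdist μ) (hdist' μ)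
      _ ≤ 2 * β * (2 * M) * (‖ρ μ - ρ' μ‖ + ‖v - v'‖) := by
          rw [sub_sub_sub_comm]
          gcongr
          exact norm_sub_le _ _
      _ = 4 * β * M * (‖ρ μ - ρ' μ‖ + ‖v - v'‖) := by ring
  have hS : Real.exp (-(4 * β * M ^ 2)) ≤ ∑ ν, e ν := by
    obtain ⟨μ⟩ := ‹Nonempty ι›
    refine le_trans ?_ (single_le_sum (fun ν _ => (Real.exp_pos _).le) (mem_univ μ))
    exact Real.exp_le_exp.2 (by nlinarith [pow_le_pow_left₀ (norm_nonneg _) (hdist μ) 2])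
  have hS' : 0 < ∑ ν, e' ν := sum_pos (fun ν _ => Real.exp_pos _) univ_nonempty
  calc ∑ μ, |amWeight β ρ v μ - amWeight β ρ' v' μ|
      ≤ 2 * (∑ μ, |e μ - e' μ|) / ∑ ν, e ν :=
        sum_abs_div_sum_sub_div_sum_le univ (fun μ _ => (Real.exp_pos _).le)
          ((Real.exp_pos _).trans_le hS) hS'
    _ ≤ 2 * (∑ μ, |e μ - e' μ|) / Real.exp (-(4 * β * M ^ 2)) := by gcongr
    _ ≤ 2 * (∑ μ, 4 * β * M * (‖ρ μ - ρ' μ‖ + ‖v - v'‖)) / Real.exp (-(4 * β * M ^ 2)) := by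
        gcongr with μ
        exact he μ
    _ = 8 * β * M * Real.exp (4 * β * M ^ 2) * ∑ μ, (‖ρ μ - ρ' μ‖ + ‖v - v'‖) := by
        rw [← mul_sum, Real.exp_neg, div_inv_eq_mul]
        ring

variable [NormedSpace ℝ E]

noncomputable def amDrift (β : ℝ) (ρ : ι → E) (v : E) : E :=
  ∑ μ, amWeight β ρ v μ • (ρ μ - v)

theorem norm_amDrift_le (hB : 0 ≤ B) (hρ : ∀ μ, ‖ρ μ‖ ≤ B) (v : E) :
    ‖amDrift β ρ v‖ ≤ ‖v‖ + B :=
  calc ‖amDrift β ρ v‖ ≤ ∑ μ, amWeight β ρ v μ * (‖v‖ + B) := by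
        refine norm_sum_le_of_le _ fun μ _ => ?_
        rw [norm_smul, Real.norm_of_nonneg (amWeight_nonneg μ)]
        exact mul_le_mul_of_nonneg_left ((norm_sub_le _ _).trans (by linarith [hρ μ]))
          (amWeight_nonneg μ)
    _ = (∑ μ, amWeight β ρ v μ) * (‖v‖ + B) := (sum_mul ..).symm
    _ ≤ ‖v‖ + B := mul_le_of_le_one_left (by positivity) sum_amWeight_le_one

theorem norm_amDrift_sub_le [Nonempty ι] (hβ : 0 ≤ β) (hρ : ∀ μ, ‖ρ μ‖ ≤ M)
    (hρ' : ∀ μ, ‖ρ' μ‖ ≤ M) (hv : ‖v‖ ≤ M) (hv' : ‖v'‖ ≤ M) :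
    ‖amDrift β ρ v - amDrift β ρ' v'‖
      ≤ (2 * M * (8 * β * M * Real.exp (4 * β * M ^ 2)) + 1) * Fintype.card ι *
          (‖v - v'‖ + ∑ μ, ‖ρ μ - ρ' μ‖) := by
  set L := 8 * β * M * Real.exp (4 * β * M ^ 2)
  have hM : 0 ≤ M := (norm_nonneg v).trans hv
  have hterm : ∀ μ, ‖amWeight β ρ v μ • (ρ μ - v) - amWeight β ρ' v' μ • (ρ' μ - v')‖
      ≤ 2 * M * |amWeight β ρ v μ - amWeight β ρ' v' μ| + (‖ρ μ - ρ' μ‖ + ‖v - v'‖) := by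
    intro μ
    rw [show amWeight β ρ v μ • (ρ μ - v) - amWeight β ρ' v' μ • (ρ' μ - v')
        = (amWeight β ρ v μ - amWeight β ρ' v' μ) • (ρ μ - v)
          + amWeight β ρ' v' μ • ((ρ μ - ρ' μ) - (v - v')) by module]
    refine (norm_add_le _ _).trans (add_le_add ?_ ?_)
    · rw [norm_smul, Real.norm_eq_abs, mul_comm]
      gcongr
      linarith [norm_sub_le (ρ μ) v, hρ μ]
    · rw [norm_smul, Real.norm_of_nonneg (amWeight_nonneg μ)]
      exact (mul_le_of_le_one_left (norm_nonneg _) (amWeight_le_one μ)).trans (norm_sub_le _ _)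
  have hcount : ∑ μ, (‖ρ μ - ρ' μ‖ + ‖v - v'‖)
      ≤ Fintype.card ι * (‖v - v'‖ + ∑ μ, ‖ρ μ - ρ' μ‖) := by
    have hcard : (1 : ℝ) ≤ Fintype.card ι := by exact_mod_cast Fintype.card_pos
    rw [sum_add_distrib, sum_const, card_univ, nsmul_eq_mul]
    nlinarith [sum_nonneg fun μ (_ : μ ∈ univ) => norm_nonneg (ρ μ - ρ' μ)]
  calc ‖amDrift β ρ v - amDrift β ρ' v'‖
      ≤ ∑ μ, (2 * M * |amWeight β ρ v μ - amWeight β ρ' v' μ| + (‖ρ μ - ρ' μ‖ + ‖v - v'‖)) := by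
        rw [amDrift, amDrift, ← sum_sub_distrib]
        exact norm_sum_le_of_le _ fun μ _ => hterm μ
    _ = 2 * M * ∑ μ, |amWeight β ρ v μ - amWeight β ρ' v' μ|
          + ∑ μ, (‖ρ μ - ρ' μ‖ + ‖v - v'‖) := by rw [sum_add_distrib, mul_sum]
    _ ≤ 2 * M * (L * ∑ μ, (‖ρ μ - ρ' μ‖ + ‖v - v'‖)) + ∑ μ, (‖ρ μ - ρ' μ‖ + ‖v - v'‖) := by
        gcongr
        exact sum_abs_amWeight_sub_le hβ hρ hρ' hv hv'
    _ = (2 * M * L + 1) * ∑ μ, (‖ρ μ - ρ' μ‖ + ‖v - v'‖) := by ring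
    _ ≤ (2 * M * L + 1) * (Fintype.card ι * (‖v - v'‖ + ∑ μ, ‖ρ μ - ρ' μ‖)) := by
        gcongr
    _ = _ := by ring

end AM

section Iterates

variable {d k : ℕ} {β r B M : ℝ} {ρ ρ' : Fin k → EuclideanSpace ℝ (Fin d)}
  {x : EuclideanSpace ℝ (Fin d)}

theorem amIter_succ (t : ℕ) :
    amIter β r ρ x (t + 1) = amIter β r ρ x t + r • amDrift β ρ (amIter β r ρ x t) := rfl

theorem norm_amIter_add_le (hr : 0 ≤ r) (hB : 0 ≤ B) (hρ : ∀ μ, ‖ρ μ‖ ≤ B) (t : ℕ) :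
    ‖amIter β r ρ x t‖ + B ≤ (1 + r) ^ t * (‖x‖ + B) := by
  refine le_geom (u := fun t => ‖amIter β r ρ x t‖ + B) (by linarith) t fun s _ => ?_
  calc ‖amIter β r ρ x (s + 1)‖ + B
      ≤ ‖amIter β r ρ x s‖ + r * (‖amIter β r ρ x s‖ + B) + B := by
        rw [amIter_succ]
        grw [norm_add_le, norm_smul, Real.norm_of_nonneg hr, norm_amDrift_le hB hρ]
    _ = (1 + r) * (‖amIter β r ρ x s‖ + B) := by ring

theorem norm_amIter_sub_add_le [NeZero k] (hβ : 0 ≤ β) (hr : 0 ≤ r) (hρ : ∀ μ, ‖ρ μ‖ ≤ M)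
    (hρ' : ∀ μ, ‖ρ' μ‖ ≤ M) (T : ℕ) (hx : ∀ t < T, ‖amIter β r ρ x t‖ ≤ M)
    (hx' : ∀ t < T, ‖amIter β r ρ' x t‖ ≤ M) :
    ‖amIter β r ρ x T - amIter β r ρ' x T‖ + ∑ μ, ‖ρ μ - ρ' μ‖
      ≤ (1 + r * ((2 * M * (8 * β * M * Real.exp (4 * β * M ^ 2)) + 1) * k)) ^ T
          * ∑ μ, ‖ρ μ - ρ' μ‖ := by
  have hM : 0 ≤ M := (norm_nonneg _).trans (hρ 0)
  set D := ∑ μ, ‖ρ μ - ρ' μ‖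
  set c := 2 * M * (8 * β * M * Real.exp (4 * β * M ^ 2)) + 1
  -- adding `D` turns the affine recursion for the distance into a geometric one
  have hgeom := le_geom (u := fun t => ‖amIter β r ρ x t - amIter β r ρ' x t‖ + D)
    (c := 1 + r * (c * k)) (by positivity) T fun t ht => ?_
  · simpa only [amIter, sub_self, norm_zero, zero_add] using hgeom
  have hdrift := norm_amDrift_sub_le hβ hρ hρ' (hx t ht) (hx' t ht)
  rw [Fintype.card_fin] at hdrift
  calc ‖amIter β r ρ x (t + 1) - amIter β r ρ' x (t + 1)‖ + D
      ≤ ‖amIter β r ρ x t - amIter β r ρ' x t‖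
          + r * (c * k * (‖amIter β r ρ x t - amIter β r ρ' x t‖ + D)) + D := by
        rw [amIter_succ, amIter_succ, add_sub_add_comm, ← smul_sub]
        grw [norm_add_le, norm_smul, Real.norm_of_nonneg hr, hdrift]
    _ = (1 + r * (c * k)) * (‖amIter β r ρ x t - amIter β r ρ' x t‖ + D) := by ring

end Iterates

theorem stmt_14_general (β B r : ℝ) (k T : ℕ) (hβ : 0 < β) (hB : 0 < B) (hk : 1 ≤ k)
    (hr : 0 < r) :
    ∃ C : ℝ, 0 < C ∧ ∀ (d : ℕ) (x : EuclideanSpace ℝ (Fin d))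
      (ρ ρ' : Fin k → EuclideanSpace ℝ (Fin d)),
      ‖x‖ ≤ B → (∀ μ, ‖ρ μ‖ ≤ B) → (∀ μ, ‖ρ' μ‖ ≤ B) →
      |‖x - amIter β r ρ x T‖ ^ 2 - ‖x - amIter β r ρ' x T‖ ^ 2|
        ≤ C * ∑ μ, ‖ρ μ - ρ' μ‖ := by
  have : NeZero k := ⟨by omega⟩
  set M := 2 * B * (1 + r) ^ T
  set K := 1 + r * ((2 * M * (8 * β * M * Real.exp (4 * β * M ^ 2)) + 1) * k)
  have hBM : B ≤ M := by nlinarith [one_le_pow₀ (by linarith : (1 : ℝ) ≤ 1 + r) (n := T)]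
  refine ⟨2 * M * K ^ T, by positivity, fun d x ρ ρ' hx hρ hρ' => ?_⟩
  have hiter : ∀ σ : Fin k → EuclideanSpace ℝ (Fin d), (∀ μ, ‖σ μ‖ ≤ B) →
      ∀ t ≤ T, ‖amIter β r σ x t‖ + B ≤ M := fun σ hσ t ht =>
    calc ‖amIter β r σ x t‖ + B ≤ (1 + r) ^ t * (‖x‖ + B) := norm_amIter_add_le hr.le hB.le hσ t
      _ ≤ (1 + r) ^ T * (B + B) := by gcongr; linarith
      _ = M := by ring
  have hlip := norm_amIter_sub_add_le hβ.le hr.le (fun μ => (hρ μ).trans hBM)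
    (fun μ => (hρ' μ).trans hBM) T (fun t ht => by linarith [hiter ρ hρ t ht.le])
    (fun t ht => by linarith [hiter ρ' hρ' t ht.le])
  have hD : 0 ≤ ∑ μ, ‖ρ μ - ρ' μ‖ := sum_nonneg fun μ _ => norm_nonneg _
  calc |‖x - amIter β r ρ x T‖ ^ 2 - ‖x - amIter β r ρ' x T‖ ^ 2|
      ≤ (‖x - amIter β r ρ x T‖ + ‖x - amIter β r ρ' x T‖)
          * ‖(x - amIter β r ρ x T) - (x - amIter β r ρ' x T)‖ := abs_norm_sq_sub_norm_sq_le _ _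
    _ ≤ (M + M) * (K ^ T * ∑ μ, ‖ρ μ - ρ' μ‖) := by
        rw [sub_sub_sub_cancel_left, norm_sub_rev (amIter β r ρ' x T)]
        gcongr
        · linarith [norm_sub_le x (amIter β r ρ x T), hiter ρ hρ T le_rfl]
        · linarith [norm_sub_le x (amIter β r ρ' x T), hiter ρ' hρ' T le_rfl]
        · linarith
    _ = 2 * M * K ^ T * ∑ μ, ‖ρ μ - ρ' μ‖ := by ring

/-- For `β, B > 0`, `k, T ≥ 1` and step ratio `r = dt/τ > 0`, there is a constant
`C > 0`, depending only on `β`, `B`, `k`, `T` and `r`, such that the per-example ClAM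
objective `‖x - x_R^T‖²` is Lipschitz in the prototypes on the ball of radius `B`:
`|‖x - x_R^T‖² - ‖x - x_{R'}^T‖²| ≤ C ∑_μ ‖ρ_μ - ρ'_μ‖`. -/
theorem stmt_14 (β B r : ℝ) (k T : ℕ) (hβ : 0 < β) (hB : 0 < B) (hk : 1 ≤ k)
    (hT : 1 ≤ T) (hr : 0 < r) :
    ∃ C : ℝ, 0 < C ∧ ∀ (d : ℕ) (x : EuclideanSpace ℝ (Fin d))
      (ρ ρ' : Fin k → EuclideanSpace ℝ (Fin d)),
      ‖x‖ ≤ B → (∀ μ, ‖ρ μ‖ ≤ B) → (∀ μ, ‖ρ' μ‖ ≤ B) →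
      |‖x - amIter β r ρ x T‖ ^ 2 - ‖x - amIter β r ρ' x T‖ ^ 2|
        ≤ C * ∑ μ, ‖ρ μ - ρ' μ‖ :=
  stmt_14_general β B r k T hβ hB hk hr
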